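/- Let j be an integer with j > 1 and let p = 2j/(2j-1). Let f ∈ L^p, let g be a trigonometric polynomial whose Fourier coefficients ĝ(n) are all real and nonnegative, and let c = (c_n)_{n∈ℤ} be a bounded sequence such that |c_n| ≤ |f̂(n)| at every integer n with ĝ(n) ≠ 0. Then ∑_n ĝ(n)|c_n| ≤ ‖g‖_{2j} ‖f‖_p. -/

import Mathlib

open MeasureTheory Complex
open scoped Real ENNReal

noncomputable section

instance : Fact (0 < 2 * Real.pi) := ⟨by positivity⟩

abbrev Circle2Pi := AddCircle (2 * Real.pi)

abbrev circleMeasure : Measure Circle2Pi := AddCircle.haarAddCircle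

/-- A trigonometric polynomial: a finite linear combination of the exponentials `e^{inθ}`. -/
def IsTrigPoly (g : Circle2Pi → ℂ) : Prop :=
  ∃ (s : Finset ℤ) (a : ℤ → ℂ), ∀ x, g x = ∑ n ∈ s, a n * fourier n x

/-
Choose unimodular `uₙ` with `uₙ f̂(n) = |f̂(n)|` and put `G = ∑ ĝ(n) ūₙ eₙ`. Then
`∑ ĝ(n) |f̂(n)| = ∫ Ḡ f ≤ ‖G‖_{2j} ‖f‖_p` by Hölder's inequality, and `‖G‖_{2j} ≤ ‖g‖_{2j}` by the
majorant principle: `‖G‖_{2j}^{2j} = ‖Gʲ‖₂²` is, by Parseval, the sum of the `|(Gʲ)^(n)|²`, and each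
coefficient of `Gʲ` is a sum of products of coefficients of `G`, so it is bounded in modulus by
the corresponding coefficient of `gʲ`, in which all these products are nonnegative.
-/

lemma MeasureTheory.norm_integral_mul_le_eLpNorm_mul_eLpNorm {α : Type*} [MeasurableSpace α]
    {μ : Measure α} {p q : ℝ≥0∞} [p.HolderConjugate q] {F G : α → ℂ}
    (hF : MemLp F p μ) (hG : MemLp G q μ) :
    ‖∫ x, F x * G x ∂μ‖ ≤ (eLpNorm F p μ).toReal * (eLpNorm G q μ).toReal := by
  have hFG : eLpNorm (fun x => F x * G x) 1 μ ≤ eLpNorm F p μ * eLpNorm G q μ := by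
    simpa using eLpNorm_le_eLpNorm_mul_eLpNorm'_of_norm hF.1 hG.1 (· * ·) 1
      (.of_forall fun x => by simp)
  have hfin : eLpNorm F p μ * eLpNorm G q μ ≠ ⊤ :=
    ENNReal.mul_ne_top hF.eLpNorm_ne_top hG.eLpNorm_ne_top
  rw [← ENNReal.toReal_mul, ← toReal_enorm]
  refine ENNReal.toReal_mono hfin ((enorm_integral_le_lintegral_enorm _).trans ?_)
  rw [← eLpNorm_one_eq_lintegral_enorm]
  exact hFG

lemma ENNReal.holderConjugate_div_sub_one {q : ℝ≥0∞} (hq : 1 ≤ q) (hq' : q ≠ ⊤) :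
    q.HolderConjugate (q / (q - 1)) := by
  have hq0 : q ≠ 0 := (zero_lt_one.trans_le hq).ne'
  rw [holderConjugate_iff, ENNReal.inv_div (.inr hq') (.inr hq0), ENNReal.div_eq_inv_mul,
    ← mul_one_add, add_tsub_cancel_of_le hq, ENNReal.inv_mul_cancel hq0 hq']

namespace AddCircle

variable {T : ℝ}

lemma fourier_sum {ι : Type*} (t : Finset ι) (k : ι → ℤ) (x : AddCircle T) :
    fourier (∑ i ∈ t, k i) x = ∏ i ∈ t, fourier (k i) x := by
  induction t using Finset.cons_induction with
  | empty => simp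
  | cons i t hi ih => rw [Finset.sum_cons, Finset.prod_cons, fourier_add, ih]

lemma sum_mul_fourier_pow (s : Finset ℤ) (d : ℤ → ℂ) (j : ℕ) (x : AddCircle T) :
    (∑ m ∈ s, d m * fourier m x) ^ j
      = ∑ t ∈ Fintype.piFinset fun _ : Fin j => s, (∏ i, d (t i)) * fourier (∑ i, t i) x := by
  rw [← Fin.prod_const, Finset.prod_univ_sum]
  simp_rw [fourier_sum, Finset.prod_mul_distrib]

variable [Fact (0 < T)]

lemma memLp_sum_mul_fourier (s : Finset ℤ) (d : ℤ → ℂ) (p : ℝ≥0∞) :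
    MemLp (fun x : AddCircle T => ∑ m ∈ s, d m * fourier m x) p haarAddCircle :=
  (by fun_prop : Continuous _).memLp_of_hasCompactSupport (.of_compactSpace _)

lemma fourierCoeff_sum_mul_fourier {ι : Type*} (t : Finset ι) (d : ι → ℂ) (k : ι → ℤ)
    (n : ℤ) :
    fourierCoeff (fun x : AddCircle T => ∑ i ∈ t, d i * fourier (k i) x) n
      = ∑ i ∈ t with k i = n, d i := by
  have hsum : (fun x : AddCircle T => ∑ i ∈ t, d i * fourier (k i) x)
      = ∑ i ∈ t, fun x => d i * fourier (k i) x := by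
    ext x; simp
  rw [hsum, fourierCoeff.sum, Finset.sum_apply, Finset.sum_filter]
  · refine Finset.sum_congr rfl fun i _ => ?_
    rw [fourierCoeff.const_mul, fourierCoeff_fourier, Pi.single_apply]
    split_ifs <;> simp_all [eq_comm]
  · intro i _
    exact (by fun_prop : Continuous _).integrable_of_hasCompactSupport (.of_compactSpace _)

lemma fourierCoeff_sum_mul_fourier_pow (s : Finset ℤ) (d : ℤ → ℂ) (j : ℕ) (n : ℤ) :
    fourierCoeff (fun x : AddCircle T => (∑ m ∈ s, d m * fourier m x) ^ j) n
      = ∑ t ∈ Fintype.piFinset (fun _ : Fin j => s) with ∑ i, t i = n, ∏ i, d (t i) := by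
  simp_rw [sum_mul_fourier_pow]
  exact fourierCoeff_sum_mul_fourier _ _ _ n

lemma norm_fourierCoeff_sum_mul_fourier_pow_le (s : Finset ℤ) (d : ℤ → ℂ) (A : ℤ → ℝ)
    (hdA : ∀ m ∈ s, ‖d m‖ ≤ A m) (j : ℕ) (n : ℤ) :
    ‖fourierCoeff (fun x : AddCircle T => (∑ m ∈ s, d m * fourier m x) ^ j) n‖
      ≤ ‖fourierCoeff (fun x : AddCircle T => (∑ m ∈ s, (A m : ℂ) * fourier m x) ^ j) n‖ := by
  have hA : ∀ m ∈ s, 0 ≤ A m := fun m hm => (norm_nonneg _).trans (hdA m hm)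
  have hmem : ∀ t ∈ Fintype.piFinset (fun _ : Fin j => s), ∀ i, t i ∈ s := fun t ht i =>
    Fintype.mem_piFinset.mp ht i
  rw [fourierCoeff_sum_mul_fourier_pow, fourierCoeff_sum_mul_fourier_pow]
  calc ‖∑ t ∈ Fintype.piFinset (fun _ : Fin j => s) with ∑ i, t i = n, ∏ i, d (t i)‖
      ≤ ∑ t ∈ Fintype.piFinset (fun _ : Fin j => s) with ∑ i, t i = n, ∏ i, A (t i) := by
        refine (norm_sum_le _ _).trans (Finset.sum_le_sum fun t ht => ?_)
        rw [norm_prod]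
        have ht := hmem t (Finset.mem_filter.mp ht).1
        exact Finset.prod_le_prod (fun _ _ => norm_nonneg _) fun i _ => hdA _ (ht i)
    _ = ‖∑ t ∈ Fintype.piFinset (fun _ : Fin j => s) with ∑ i, t i = n, ∏ i, (A (t i) : ℂ)‖ := by
        simp_rw [← Complex.ofReal_prod]
        rw [← Complex.ofReal_sum, Complex.norm_real, Real.norm_of_nonneg]
        refine Finset.sum_nonneg fun t ht => Finset.prod_nonneg fun i _ => ?_
        exact hA _ (hmem t (Finset.mem_filter.mp ht).1 i)

lemma _root_.MeasureTheory.MemLp.hasSum_sq_norm_fourierCoeff {F : AddCircle T → ℂ}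
    (hF : MemLp F 2 haarAddCircle) :
    HasSum (fun n => ‖fourierCoeff F n‖ ^ 2) ((eLpNorm F 2 haarAddCircle).toReal ^ 2) := by
  have h := lp.hasSum_norm (p := 2) (by simp) (fourierBasis.repr hF.toLp)
  simp_rw [fourierBasis_repr, fourierCoeff_congr_ae hF.coeFn_toLp] at h
  simpa [LinearIsometryEquiv.norm_map, Lp.norm_toLp] using h

lemma eLpNorm_two_le_of_norm_fourierCoeff_le {F G : AddCircle T → ℂ}
    (hF : MemLp F 2 haarAddCircle) (hG : MemLp G 2 haarAddCircle)
    (h : ∀ n, ‖fourierCoeff F n‖ ≤ ‖fourierCoeff G n‖) :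
    eLpNorm F 2 haarAddCircle ≤ eLpNorm G 2 haarAddCircle := by
  have hsq := hasSum_le (fun n => pow_le_pow_left₀ (norm_nonneg _) (h n) 2)
    hF.hasSum_sq_norm_fourierCoeff hG.hasSum_sq_norm_fourierCoeff
  rw [← ENNReal.toReal_le_toReal hF.eLpNorm_ne_top hG.eLpNorm_ne_top]
  exact (pow_le_pow_iff_left₀ ENNReal.toReal_nonneg ENNReal.toReal_nonneg two_ne_zero).mp hsq

lemma eLpNorm_two_mul_rpow_eq {F : AddCircle T → ℂ} {j : ℕ} (hj : j ≠ 0) :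
    eLpNorm F (2 * j) haarAddCircle ^ (j : ℝ) = eLpNorm (fun x => F x ^ j) 2 haarAddCircle := by
  rw [← ENNReal.ofReal_natCast, ← eLpNorm_norm_rpow F (by positivity)]
  exact eLpNorm_congr_norm_ae (.of_forall fun x => by simp)

lemma eLpNorm_two_mul_le_of_norm_fourierCoeff_pow_le {F G : AddCircle T → ℂ} {j : ℕ}
    (hF : MemLp F (2 * j) haarAddCircle) (hG : MemLp G (2 * j) haarAddCircle)
    (h : ∀ n, ‖fourierCoeff (fun x => F x ^ j) n‖ ≤ ‖fourierCoeff (fun x => G x ^ j) n‖) :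
    eLpNorm F (2 * j) haarAddCircle ≤ eLpNorm G (2 * j) haarAddCircle := by
  rcases eq_or_ne j 0 with rfl | hj
  · simp
  have hpow : ∀ {H : AddCircle T → ℂ}, MemLp H (2 * j) haarAddCircle →
      MemLp (fun x => H x ^ j) 2 haarAddCircle := fun hH =>
    ⟨hH.1.pow j, by
      rw [← eLpNorm_two_mul_rpow_eq hj]
      exact ENNReal.rpow_lt_top_of_nonneg (by positivity) hH.eLpNorm_ne_top⟩
  rw [← ENNReal.rpow_le_rpow_iff (z := j) (by positivity), eLpNorm_two_mul_rpow_eq hj,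
    eLpNorm_two_mul_rpow_eq hj]
  exact eLpNorm_two_le_of_norm_fourierCoeff_le (hpow hF) (hpow hG) h

lemma eLpNorm_sum_mul_fourier_le_of_norm_le (s : Finset ℤ) (d : ℤ → ℂ) (A : ℤ → ℝ)
    (hdA : ∀ m ∈ s, ‖d m‖ ≤ A m) (j : ℕ) :
    eLpNorm (fun x : AddCircle T => ∑ m ∈ s, d m * fourier m x) (2 * j) haarAddCircle
      ≤ eLpNorm (fun x : AddCircle T => ∑ m ∈ s, (A m : ℂ) * fourier m x) (2 * j)
          haarAddCircle :=
  eLpNorm_two_mul_le_of_norm_fourierCoeff_pow_le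
    (memLp_sum_mul_fourier s d _) (memLp_sum_mul_fourier s _ _)
    (norm_fourierCoeff_sum_mul_fourier_pow_le s d A hdA j)

lemma integral_conj_sum_mul_fourier_mul {f : AddCircle T → ℂ} (hf : Integrable f haarAddCircle)
    (s : Finset ℤ) (b : ℤ → ℂ) :
    ∫ x, starRingEnd ℂ (∑ n ∈ s, b n * fourier n x) * f x ∂haarAddCircle
      = ∑ n ∈ s, starRingEnd ℂ (b n) * fourierCoeff f n := by
  simp_rw [map_sum, map_mul, ← fourier_neg, Finset.sum_mul, mul_assoc]
  have hint : ∀ n : ℤ, Integrable (fun x => fourier (-n) x * f x) haarAddCircle :=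
    fun n => hf.fourier_smul (-n)
  rw [integral_finsetSum _ fun n _ => (hint n).const_mul _]
  simp_rw [integral_const_mul]
  rfl

lemma sum_mul_norm_fourierCoeff_le (s : Finset ℤ) (A : ℤ → ℝ) (hA : ∀ n ∈ s, 0 ≤ A n)
    {j : ℕ} {p : ℝ≥0∞} [(2 * j : ℝ≥0∞).HolderConjugate p] {f : AddCircle T → ℂ}
    (hf : MemLp f p haarAddCircle) :
    ∑ n ∈ s, A n * ‖fourierCoeff f n‖
      ≤ (eLpNorm (fun x : AddCircle T => ∑ n ∈ s, (A n : ℂ) * fourier n x) (2 * j)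
          haarAddCircle).toReal * (eLpNorm f p haarAddCircle).toReal := by
  choose u hu_norm hu using fun n => Complex.exists_norm_eq_mul_self (fourierCoeff f n)
  set G : AddCircle T → ℂ := fun x => ∑ n ∈ s, (A n * starRingEnd ℂ (u n)) * fourier n x
  have hG : MemLp G (2 * j) haarAddCircle := memLp_sum_mul_fourier s _ _
  have hGA : eLpNorm G (2 * j) haarAddCircle
      ≤ eLpNorm (fun x => ∑ n ∈ s, (A n : ℂ) * fourier n x) (2 * j) haarAddCircle :=
    eLpNorm_sum_mul_fourier_le_of_norm_le s _ A
      (fun n hn => by simp [hu_norm, abs_of_nonneg (hA n hn)]) j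
  have hint : ∫ x, starRingEnd ℂ (G x) * f x ∂haarAddCircle
      = ((∑ n ∈ s, A n * ‖fourierCoeff f n‖ : ℝ) : ℂ) := by
    have hf1 := hf.integrable (ENNReal.HolderConjugate.one_le p (2 * j))
    rw [integral_conj_sum_mul_fourier_mul hf1]
    push_cast
    simp_rw [hu, map_mul, Complex.conj_ofReal, Complex.conj_conj, mul_assoc]
  calc ∑ n ∈ s, A n * ‖fourierCoeff f n‖
      = ‖∫ x, starRingEnd ℂ (G x) * f x ∂haarAddCircle‖ := by
        rw [hint, Complex.norm_real, Real.norm_of_nonneg]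
        exact Finset.sum_nonneg fun n hn => mul_nonneg (hA n hn) (norm_nonneg _)
    _ ≤ (eLpNorm (fun x => starRingEnd ℂ (G x)) (2 * j) haarAddCircle).toReal
          * (eLpNorm f p haarAddCircle).toReal :=
        norm_integral_mul_le_eLpNorm_mul_eLpNorm hG.star hf
    _ ≤ _ := by
        rw [eLpNorm_congr_norm_ae (.of_forall fun x => RCLike.norm_conj (G x))]
        exact mul_le_mul_of_nonneg_right
          (ENNReal.toReal_mono (memLp_sum_mul_fourier s _ _).eLpNorm_ne_top hGA)
          ENNReal.toReal_nonneg

end AddCircle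

lemma IsTrigPoly.exists_eq_sum_fourierCoeff {g : Circle2Pi → ℂ} (hg : IsTrigPoly g) :
    ∃ s : Finset ℤ, (∀ x, g x = ∑ n ∈ s, fourierCoeff g n * fourier n x) ∧
      ∀ n ∉ s, fourierCoeff g n = 0 := by
  obtain ⟨s, a, hga⟩ := hg
  have hcoeff : ∀ n, fourierCoeff g n = if n ∈ s then a n else 0 := fun n => by
    rw [show g = _ from funext hga]
    exact (AddCircle.fourierCoeff_sum_mul_fourier s a id n).trans (by simp [Finset.sum_filter])
  refine ⟨s, fun x => ?_, fun n hn => by simp [hcoeff, hn]⟩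
  rw [hga x]
  exact Finset.sum_congr rfl fun n hn => by simp [hcoeff, hn]

theorem key_bilinear_inequality_general (j : ℕ) (hj : 1 < j)
    (p : ℝ≥0∞) (hp : p = (2 * j : ℝ≥0∞) / (2 * j - 1))
    (f : Circle2Pi → ℂ) (hf : MemLp f p circleMeasure)
    (g : Circle2Pi → ℂ) (hg : IsTrigPoly g)
    (hgpos : ∀ n : ℤ, (fourierCoeff g n).im = 0 ∧ 0 ≤ (fourierCoeff g n).re)
    (c : ℤ → ℂ)
    (hcf : ∀ n : ℤ, fourierCoeff g n ≠ 0 →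
      ‖c n‖ ≤ ‖fourierCoeff f n‖) :
    ∑' n : ℤ, (fourierCoeff g n).re * ‖c n‖ ≤
      (eLpNorm g (2 * j : ℝ≥0∞) circleMeasure).toReal *
        (eLpNorm f p circleMeasure).toReal := by
  obtain ⟨s, hgs, hs⟩ := hg.exists_eq_sum_fourierCoeff
  have : (2 * j : ℝ≥0∞).HolderConjugate p := by
    rw [hp]
    exact ENNReal.holderConjugate_div_sub_one (by norm_cast; omega) (by finiteness)
  have hg_re : ∀ n, fourierCoeff g n = ((fourierCoeff g n).re : ℂ) :=
    fun n => Complex.ext rfl (hgpos n).1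
  have hg_eq : g = fun x => ∑ n ∈ s, ((fourierCoeff g n).re : ℂ) * fourier n x := by
    ext x; rw [hgs x]; simp_rw [← hg_re]
  calc ∑' n, (fourierCoeff g n).re * ‖c n‖
      = ∑ n ∈ s, (fourierCoeff g n).re * ‖c n‖ :=
        tsum_eq_sum fun n hn => by simp [hs n hn]
    _ ≤ ∑ n ∈ s, (fourierCoeff g n).re * ‖fourierCoeff f n‖ := by
        refine Finset.sum_le_sum fun n _ => ?_
        rcases eq_or_ne (fourierCoeff g n) 0 with h | h
        · simp [h]
        · exact mul_le_mul_of_nonneg_left (hcf n h) (hgpos n).2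
    _ ≤ _ := by
        have hbound := AddCircle.sum_mul_norm_fourierCoeff_le (j := j) s _ (fun n _ => (hgpos n).2) hf
        rwa [← hg_eq] at hbound

/-- for `p = 2j/(2j-1)` with integer `j > 1`, if `g` is a trigonometric
polynomial with nonnegative real Fourier coefficients and `|c n| ≤ |f̂(n)|` wherever
`ĝ(n) ≠ 0`, then `∑ₙ ĝ(n) |c n| ≤ ‖g‖_{2j} ‖f‖_p`. -/
theorem key_bilinear_inequality (j : ℕ) (hj : 1 < j)
    (p : ℝ≥0∞) (hp : p = (2 * j : ℝ≥0∞) / (2 * j - 1))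
    (f : Circle2Pi → ℂ) (hf : MemLp f p circleMeasure)
    (g : Circle2Pi → ℂ) (hg : IsTrigPoly g)
    (hgpos : ∀ n : ℤ, (fourierCoeff g n).im = 0 ∧ 0 ≤ (fourierCoeff g n).re)
    (c : ℤ → ℂ) (hbdd : ∃ M : ℝ, ∀ n : ℤ, ‖c n‖ ≤ M)
    (hcf : ∀ n : ℤ, fourierCoeff g n ≠ 0 →
      ‖c n‖ ≤ ‖fourierCoeff f n‖) :
    ∑' n : ℤ, (fourierCoeff g n).re * ‖c n‖ ≤
      (eLpNorm g (2 * j : ℝ≥0∞) circleMeasure).toReal *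
        (eLpNorm f p circleMeasure).toReal :=
  key_bilinear_inequality_general j hj p hp f hf g hg hgpos c hcf
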